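/- Let f_1, ..., f_K : H → ℝ be convex differentiable functions on a real Hilbert space H, let x : [0,∞) → H be differentiable, and suppose ẋ(t) = -Σ_k w_k(t) ∇f_k(x(t)) where for each t, w(t) lies in the probability simplex and Σ_k w_k(t) ∇f_k(x(t)) is the minimal-norm element of conv{∇f_1(x(t)),...,∇f_K(x(t))}. Then for each k, the function t ↦ f_k(x(t)) is nonincreasing; in fact d/dt f_k(x(t)) ≤ -‖ẋ(t)‖². -/

import Mathlib

open scoped RealInnerProductSpace

/-!
The velocity is `-v`, where `v` is the minimal-norm point of the convex hull of the gradients.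
The variational characterisation of the projection of `0` onto that hull gives
`‖v‖² ≤ ⟪v, ∇f_k⟫` for every `k`, so by the chain rule
`d/dt f_k(x(t)) = -⟪∇f_k, v⟫ ≤ -‖v‖² = -‖ẋ‖² ≤ 0`.
-/

section MinNorm

variable {F : Type*} [NormedAddCommGroup F] [InnerProductSpace ℝ F]

theorem sq_norm_le_inner_of_forall_norm_le {s : Set F} (hs : Convex ℝ s) {v : F} (hv : v ∈ s)
    (hmin : ∀ u ∈ s, ‖v‖ ≤ ‖u‖) {u : F} (hu : u ∈ s) : ‖v‖ ^ 2 ≤ ⟪v, u⟫ := by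
  have : Nonempty s := ⟨⟨v, hv⟩⟩
  have hinf : ‖(0 : F) - v‖ = ⨅ w : s, ‖(0 : F) - w‖ := by
    have hbdd : BddBelow (Set.range fun w : s => ‖(0 : F) - w‖) :=
      ⟨0, by rintro _ ⟨w, rfl⟩; exact norm_nonneg _⟩
    refine le_antisymm (le_ciInf fun w => ?_) (ciInf_le hbdd ⟨v, hv⟩)
    simpa only [zero_sub, norm_neg] using hmin w w.2
  have hproj := (norm_eq_iInf_iff_real_inner_le_zero hs hv).1 hinf u hu
  rw [zero_sub, inner_neg_left, inner_sub_right, real_inner_self_eq_norm_sq] at hproj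
  linarith

theorem sq_norm_sum_smul_le_inner {ι : Type*} [Fintype ι] {g : ι → F} {w : ι → ℝ}
    (hw₀ : ∀ i, 0 ≤ w i) (hw₁ : ∑ i, w i = 1)
    (hmin : ∀ u ∈ convexHull ℝ (Set.range g), ‖∑ i, w i • g i‖ ≤ ‖u‖) (k : ι) :
    ‖∑ i, w i • g i‖ ^ 2 ≤ ⟪∑ i, w i • g i, g k⟫ :=
  sq_norm_le_inner_of_forall_norm_le (convex_convexHull ℝ _)
    ((convex_convexHull ℝ _).sum_mem (fun i _ => hw₀ i) hw₁
      fun i _ => subset_convexHull ℝ _ (Set.mem_range_self i))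
    hmin (subset_convexHull ℝ _ (Set.mem_range_self k))

end MinNorm

theorem HasGradientAt.comp_hasDerivAt {F : Type*} [NormedAddCommGroup F] [InnerProductSpace ℝ F]
    [CompleteSpace F] {f : F → ℝ} {g : F} {x : ℝ → F} {x' : F} {t : ℝ}
    (hf : HasGradientAt f g (x t)) (hx : HasDerivAt x x' t) :
    HasDerivAt (fun s => f (x s)) ⟪g, x'⟫ t := by
  exact (hf.hasFDerivAt.comp_hasDerivAt t hx).congr_deriv (InnerProductSpace.toDual_apply_apply ..)

theorem stmt_9_general {H : Type*} [NormedAddCommGroup H] [InnerProductSpace ℝ H] [CompleteSpace H]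
    (K : ℕ) (f : Fin K → H → ℝ) (f' : Fin K → H → H)
    (hgrad : ∀ k y, HasGradientAt (f k) (f' k y) y)
    (x : ℝ → H) (hx : Differentiable ℝ x)
    (w : ℝ → Fin K → ℝ)
    (hw : ∀ t, (∀ k, 0 ≤ w t k) ∧ ∑ k, w t k = 1)
    (hode : ∀ t, deriv x t = -∑ k, w t k • f' k (x t))
    (hminnorm : ∀ t, ∀ u ∈ convexHull ℝ (Set.range fun k => f' k (x t)),
      ‖∑ k, w t k • f' k (x t)‖ ≤ ‖u‖) :
    ∀ k : Fin K,
      (∀ t, 0 ≤ t → deriv (fun s => f k (x s)) t ≤ -‖deriv x t‖ ^ 2) ∧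
        AntitoneOn (fun t => f k (x t)) (Set.Ici 0) := by
  intro k
  have hderiv (t : ℝ) : HasDerivAt (fun s => f k (x s)) ⟪f' k (x t), deriv x t⟫ t :=
    (hgrad k (x t)).comp_hasDerivAt (hx t).hasDerivAt
  have hle (t : ℝ) : deriv (fun s => f k (x s)) t ≤ -‖deriv x t‖ ^ 2 := by
    have hv := sq_norm_sum_smul_le_inner (hw t).1 (hw t).2 (hminnorm t) k
    rw [(hderiv t).deriv, hode t, norm_neg, inner_neg_right, real_inner_comm]
    linarith
  refine ⟨fun t _ => hle t, antitoneOn_of_deriv_nonpos (convex_Ici 0) ?_ ?_ ?_⟩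
  · exact (continuous_iff_continuousAt.2 fun t => (hderiv t).continuousAt).continuousOn
  · exact fun t _ => (hderiv t).differentiableAt.differentiableWithinAt
  · exact fun t _ => (hle t).trans (neg_nonpos.2 (sq_nonneg _))

theorem stmt_9 {H : Type*} [NormedAddCommGroup H] [InnerProductSpace ℝ H] [CompleteSpace H]
    (K : ℕ) (f : Fin K → H → ℝ) (f' : Fin K → H → H)
    (hgrad : ∀ k y, HasGradientAt (f k) (f' k y) y)
    (hconv : ∀ k, ∀ y z : H, f k y + ⟪f' k y, z - y⟫ ≤ f k z)
    (x : ℝ → H) (hx : Differentiable ℝ x)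
    (w : ℝ → Fin K → ℝ)
    (hw : ∀ t, (∀ k, 0 ≤ w t k) ∧ ∑ k, w t k = 1)
    (hode : ∀ t, deriv x t = -∑ k, w t k • f' k (x t))
    (hminnorm : ∀ t, ∀ u ∈ convexHull ℝ (Set.range fun k => f' k (x t)),
      ‖∑ k, w t k • f' k (x t)‖ ≤ ‖u‖) :
    ∀ k : Fin K,
      (∀ t, 0 ≤ t → deriv (fun s => f k (x s)) t ≤ -‖deriv x t‖ ^ 2) ∧
        AntitoneOn (fun t => f k (x t)) (Set.Ici 0) :=
  stmt_9_general K f f' hgrad x hx w hw hode hminnorm
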